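/- arXiv:2504.08187 — 3 statements merged into one kernel-verified Lean document; each statement's English description precedes it below -/
import Mathlib

section
/- Let n ≥ 1 and let a = (1,1,…,1) (n−1 ones) be the area sequence of the path graph P_n on n vertices. Then the unicellular LLT polynomial of a satisfies LLT_a(x;q) = Σ_{α ⊨ n} q^{a(set(α))} · r_α, the sum over all compositions α of n, where r_α is the ribbon Schur function. -/
open scoped Classical

noncomputable section

/-- The monomial `x_{κ(1)} ⋯ x_{κ(n)}` recording the colors of vertices `1, …, n`,
as an exponent vector. -/
def colMono (n : ℕ) (κ : ℕ → ℕ) : ℕ →₀ ℕ :=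
  ∑ v ∈ Finset.Icc 1 n, Finsupp.single (κ v) 1

/-- A coloring `κ : [n] → ℕ`, normalized to be `0` outside of `[n] = {1, …, n}`. -/
def Supported (n : ℕ) (κ : ℕ → ℕ) : Prop :=
  ∀ v, v < 1 ∨ n < v → κ v = 0

/-- The number of ascents of a coloring `κ`: edges `(i,j) ∈ E` with `i < j` and `κ i < κ j`. -/
def asc (E : Finset (ℕ × ℕ)) (κ : ℕ → ℕ) : ℕ :=
  (E.filter fun e => e.1 < e.2 ∧ κ e.1 < κ e.2).card

/-- The unicellular LLT polynomial of a graph with vertex set `[n]` and edge set `E`: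
`LLT = Σ_κ q^{asc κ} x_{κ(1)} ⋯ x_{κ(n)}`, a power series in `x_0, x_1, x_2, …` with
coefficients in `ℤ[q]` (where `q = Polynomial.X`). -/
def LLT (n : ℕ) (E : Finset (ℕ × ℕ)) : MvPowerSeries ℕ (Polynomial ℤ) :=
  fun d => ∑ᶠ κ : ℕ → ℕ,
    if Supported n κ ∧ colMono n κ = d then (Polynomial.X : Polynomial ℤ) ^ asc E κ else 0

/-- `set(α) = {α₁, α₁+α₂, …, α₁+⋯+α_{ℓ-1}} ⊆ [n-1]` for a composition `α ⊨ n`. -/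
def compSet {n : ℕ} (c : Composition n) : Finset ℕ :=
  (Finset.Ico 1 c.length).image c.sizeUpTo

/-- The condition on a coloring `κ : [n] → ℕ` in the definition of the ribbon Schur
function `r_α`: `κ(i) < κ(i+1)` if `i ∈ set(α)` and `κ(i) ≥ κ(i+1)` otherwise. -/
def RibbonCond (n : ℕ) {N : ℕ} (c : Composition N) (κ : ℕ → ℕ) : Prop :=
  ∀ i, 1 ≤ i → i ≤ n - 1 →
    (i ∈ compSet c → κ i < κ (i + 1)) ∧ (i ∉ compSet c → κ (i + 1) ≤ κ i)

/-- The ribbon Schur function `r_α` of a composition `α ⊨ n`, as a power series in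
`x_0, x_1, x_2, …` with coefficients in `ℤ[q]`. -/
def ribbon {n : ℕ} (c : Composition n) : MvPowerSeries ℕ (Polynomial ℤ) :=
  fun d => ∑ᶠ κ : ℕ → ℕ,
    if Supported n κ ∧ colMono n κ = d ∧ RibbonCond n c κ then 1 else 0

/-- `v(S) = Σ_{s ∈ S} v_s`. -/
def wt (v : ℕ → ℕ) (S : Finset ℕ) : ℕ := ∑ s ∈ S, v s

/-- `Σ_{α ⊨ n} q^{v(set(α))} r_α`. -/
def qRibbonSum (n : ℕ) (v : ℕ → ℕ) : MvPowerSeries ℕ (Polynomial ℤ) :=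
  ∑ α : Composition n, (Polynomial.X : Polynomial ℤ) ^ wt v (compSet α) • ribbon α

/-- Edge set of the path `P_n`: edges `(i, i+1)` for `1 ≤ i ≤ n-1`. -/
def pathEdges (n : ℕ) : Finset (ℕ × ℕ) :=
  (Finset.Icc 1 (n - 1)).image fun i => (i, i + 1)

/-- Edge set of the complete graph `K_m`: edges `(i, j)` for `1 ≤ i < j ≤ m`. -/
def completeEdges (m : ℕ) : Finset (ℕ × ℕ) :=
  ((Finset.Icc 1 m) ×ˢ (Finset.Icc 1 m)).filter fun e => e.1 < e.2

/-- Edge set of the melting complete graph `K_m^{(k)}`: `K_m` with the `k` edges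
`(1,m), (1,m-1), …, (1,m-k+1)` removed. -/
def meltingCompleteEdges (m k : ℕ) : Finset (ℕ × ℕ) :=
  completeEdges m \ ((Finset.Icc (m - k + 1) m).image fun j => (1, j))

/-- Edge set of the concatenation `G + H`, where `G` has `n` vertices:
`E(G) ∪ {(i+n-1, j+n-1) : (i,j) ∈ E(H)}`. -/
def concatEdges (n : ℕ) (EG EH : Finset (ℕ × ℕ)) : Finset (ℕ × ℕ) :=
  EG ∪ EH.image fun e => (e.1 + n - 1, e.2 + n - 1)

/-- Edge set of the melting lollipop graph `L_{m,n}^{(k)} = P_{n+1} + K_m^{(k)}`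
on `n + m` vertices. -/
def lollipopEdges (m n k : ℕ) : Finset (ℕ × ℕ) :=
  concatEdges (n + 1) (pathEdges (n + 1)) (meltingCompleteEdges m k)

/-- The area sequence of the graph with edge set `E`:
`a_i = max({0} ∪ {j - i : (i,j) ∈ E})`. -/
def areaSeq (E : Finset (ℕ × ℕ)) (i : ℕ) : ℕ :=
  (E.filter fun e => e.1 = i).sup fun e => e.2 - e.1

/-- Edge set of the reverse `Gʳ` of a graph `G` on `n` vertices:
`{(n+1-j, n+1-i) : (i,j) ∈ E(G)}`. -/
def reverseEdges (n : ℕ) (E : Finset (ℕ × ℕ)) : Finset (ℕ × ℕ) :=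
  E.image fun e => (n + 1 - e.2, n + 1 - e.1)

/-- Edge set of the two-headed melting lollipop graph
`⁽ᵏ¹⁾ₘ₁L_{m₂,n}^{(k₂)} = (K_{m₁}^{(k₁)})ʳ + P_{n+2} + K_{m₂}^{(k₂)}`,
where `np1 = n + 1` (so that `n ≥ -1` is allowed). It has `m₁ + n + m₂` vertices. -/
def twoHeadedEdges (m1 k1 np1 m2 k2 : ℕ) : Finset (ℕ × ℕ) :=
  concatEdges (m1 + np1)
    (concatEdges m1 (reverseEdges m1 (meltingCompleteEdges m1 k1)) (pathEdges (np1 + 1)))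
    (meltingCompleteEdges m2 k2)

/-- `E` is the edge set of a unit interval graph on vertex set `[N] = {1, …, N}`:
edges `(i,j)` satisfy `1 ≤ i < j ≤ N`, and if `(i,j) ∈ E` and `i ≤ k < l ≤ j`
then `(k,l) ∈ E`. -/
def IsUnitInterval (N : ℕ) (E : Finset (ℕ × ℕ)) : Prop :=
  (∀ e ∈ E, 1 ≤ e.1 ∧ e.1 < e.2 ∧ e.2 ≤ N) ∧
  ∀ i j k l : ℕ, (i, j) ∈ E → i ≤ k → k < l → l ≤ j → (k, l) ∈ E

/-- `a` is the area sequence of some unit interval graph on `N` vertices. -/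
def IsAreaSeq (N : ℕ) (a : ℕ → ℕ) : Prop :=
  ∃ E : Finset (ℕ × ℕ), IsUnitInterval N E ∧ ∀ i, a i = areaSeq E i

/-- The unit interval graph determined by an area sequence `a` on `N` vertices:
edges `(i, j)` with `i < j ≤ i + a_i`. -/
def graphOfArea (N : ℕ) (a : ℕ → ℕ) : Finset (ℕ × ℕ) :=
  ((Finset.Icc 1 N) ×ˢ (Finset.Icc 1 N)).filter fun e => e.1 < e.2 ∧ e.2 ≤ e.1 + a e.1

/-- The unicellular LLT polynomial of an area sequence `a` on `N` vertices. -/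
def LLTarea (N : ℕ) (a : ℕ → ℕ) : MvPowerSeries ℕ (Polynomial ℤ) :=
  LLT N (graphOfArea N a)

/-- A standard Young tableau of shape `μ`: a filling of the cells of `μ` with
`1, …, |μ|` each occurring exactly once, strictly increasing along rows and columns
(and `0` outside `μ`). -/
structure StandardYT (μ : YoungDiagram) where
  entry : ℕ × ℕ → ℕ
  bijOn : Set.BijOn entry ↑μ.cells (Set.Icc 1 μ.card)
  zeros : ∀ c ∉ μ.cells, entry c = 0
  row_lt : ∀ i j1 j2 : ℕ, j1 < j2 → (i, j2) ∈ μ → entry (i, j1) < entry (i, j2)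
  col_lt : ∀ i1 i2 j : ℕ, i1 < i2 → (i2, j) ∈ μ → entry (i1, j) < entry (i2, j)

/-- The descent set `D(T) ⊆ [N-1]` of a standard Young tableau `T`: those `k` such that
`k + 1` lies in a strictly later row than `k`. -/
def descents {μ : YoungDiagram} (T : StandardYT μ) : Finset ℕ :=
  (Finset.Icc 1 (μ.card - 1)).filter fun k =>
    ∃ c1 ∈ μ.cells, ∃ c2 ∈ μ.cells,
      T.entry c1 = k ∧ T.entry c2 = k + 1 ∧ c1.1 < c2.1

/-- The weight (exponent vector) `x^T` of a semistandard Young tableau. -/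
def ssytWeight {μ : YoungDiagram} (T : SemistandardYoungTableau μ) : ℕ →₀ ℕ :=
  ∑ c ∈ μ.cells, Finsupp.single (T c.1 c.2) 1

/-- The Schur function `s_μ = Σ_T x^T`, the sum over all semistandard Young tableaux
of shape `μ`, as a power series in `x_0, x_1, x_2, …` with coefficients in `ℤ[q]`. -/
def schur (μ : YoungDiagram) : MvPowerSeries ℕ (Polynomial ℤ) :=
  fun d => ∑ᶠ T : SemistandardYoungTableau μ, if ssytWeight T = d then 1 else 0

/-- `Σ_{λ ⊢ N} Σ_{T ∈ SYT(λ)} q^{b(D(T))} s_λ`, where partitions `λ ⊢ N` are identified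
with Young diagrams with `N` cells. -/
def descentSchurSum (N : ℕ) (b : ℕ → ℕ) : MvPowerSeries ℕ (Polynomial ℤ) :=
  ∑ᶠ (μ : YoungDiagram) (_ : μ.card = N) (T : StandardYT μ),
    (Polynomial.X : Polynomial ℤ) ^ wt b (descents T) • schur μ

/-! On the path the ascents of a coloring `κ` are the positions `i ∈ [n-1]` with
`κ i < κ (i+1)`; call this set `Asc κ`. Since compositions of `n` correspond bijectively to
subsets of `[n-1]` via `α ↦ set(α)`, every coloring satisfies the ribbon condition of exactly
one composition, the one with `set(α) = Asc κ`. Hence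
`Σ_α q^{v(set α)} r_α = Σ_κ q^{v(Asc κ)} x^κ` for every `v`, and for `v = a ≡ 1` the exponent
is `#Asc κ = asc κ`. -/

open Finset Polynomial

section Compositions

variable {n : ℕ}

lemma mem_compSet_iff (c : Composition n) {j : ℕ} :
    j ∈ compSet c ↔ ∃ i, 1 ≤ i ∧ i < c.length ∧ c.sizeUpTo i = j := by
  simp [compSet, and_assoc]

lemma compSet_subset_Icc (c : Composition n) : compSet c ⊆ Icc 1 (n - 1) := by
  intro j hj
  obtain ⟨i, hi₁, hi, rfl⟩ := (mem_compSet_iff c).1 hj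
  have h₀ : c.sizeUpTo 0 < c.sizeUpTo 1 := c.sizeUpTo_strict_mono (by omega)
  have h₁ : c.sizeUpTo 1 ≤ c.sizeUpTo i := c.monotone_sizeUpTo hi₁
  have h₂ : c.sizeUpTo i < c.sizeUpTo (i + 1) := c.sizeUpTo_strict_mono hi
  have h₃ : c.sizeUpTo (i + 1) ≤ n := c.sizeUpTo_le _
  rw [c.sizeUpTo_zero] at h₀
  rw [mem_Icc]
  omega

lemma mem_boundaries_iff_mem_compSet (c : Composition n) (x : Fin (n + 1)) :
    x ∈ c.boundaries ↔ x = 0 ∨ x = Fin.last n ∨ (x : ℕ) ∈ compSet c := by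
  simp only [Composition.boundaries, mem_map, mem_univ, true_and, mem_compSet_iff]
  constructor
  · rintro ⟨⟨i, hi⟩, rfl⟩
    rcases Nat.eq_zero_or_pos i with rfl | hi₀
    · exact Or.inl (Fin.ext c.sizeUpTo_zero)
    rcases (Nat.lt_succ_iff.1 hi).eq_or_lt with rfl | hlt
    · exact Or.inr (Or.inl (Fin.ext c.sizeUpTo_length))
    · exact Or.inr (Or.inr ⟨i, hi₀, hlt, rfl⟩)
  · rintro (rfl | rfl | ⟨i, hi₁, hi, hx⟩)
    · exact ⟨0, c.boundary_zero⟩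
    · exact ⟨Fin.last _, c.boundary_last⟩
    · exact ⟨⟨i, by omega⟩, Fin.ext hx⟩

lemma compSet_injective : Function.Injective (compSet (n := n)) := by
  intro c₁ c₂ h
  apply (compositionEquiv n).injective
  ext x
  simp only [compositionEquiv, Equiv.coe_fn_mk, Composition.toCompositionAsSet,
    mem_boundaries_iff_mem_compSet, h]

lemma exists_compSet_eq {S : Finset ℕ} (hS : S ⊆ Icc 1 (n - 1)) :
    ∃ c : Composition n, compSet c = S := by
  let D : CompositionAsSet n :=
    ⟨{x | x = 0 ∨ x = Fin.last n ∨ (x : ℕ) ∈ S}, by simp, by simp⟩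
  refine ⟨D.toComposition, ?_⟩
  ext j
  by_cases hj : j ∈ Icc 1 (n - 1)
  · rw [mem_Icc] at hj
    let x : Fin (n + 1) := ⟨j, by omega⟩
    have hx₀ : x ≠ 0 := Fin.ne_of_val_ne (by simp only [x, Fin.val_zero]; omega)
    have hxl : x ≠ Fin.last n := Fin.ne_of_val_ne (by simp only [x, Fin.val_last]; omega)
    have hx := mem_boundaries_iff_mem_compSet D.toComposition x
    rw [D.toComposition_boundaries] at hx
    simpa [D, x, hx₀, hxl] using hx.symm
  · exact iff_of_false (fun h => hj (compSet_subset_Icc _ h)) (fun h => hj (hS h))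

end Compositions

section Ascents

variable {n : ℕ}

def ascSet (n : ℕ) (κ : ℕ → ℕ) : Finset ℕ :=
  {i ∈ Icc 1 (n - 1) | κ i < κ (i + 1)}

lemma ascSet_subset_Icc (n : ℕ) (κ : ℕ → ℕ) : ascSet n κ ⊆ Icc 1 (n - 1) :=
  filter_subset _ _

lemma ribbonCond_iff_compSet_eq (c : Composition n) (κ : ℕ → ℕ) :
    RibbonCond n c κ ↔ compSet c = ascSet n κ := by
  constructor
  · intro h
    ext i
    by_cases hi : i ∈ Icc 1 (n - 1)
    · obtain ⟨hi₁, hi₂⟩ := mem_Icc.1 hi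
      obtain ⟨hasc, hdesc⟩ := h i hi₁ hi₂
      simp only [ascSet, mem_filter, hi, true_and]
      exact ⟨hasc, fun hlt => by_contra fun hc => (hdesc hc).not_gt hlt⟩
    · exact iff_of_false (fun h' => hi (compSet_subset_Icc c h'))
        (fun h' => hi (ascSet_subset_Icc n κ h'))
  · intro h i hi₁ hi₂
    rw [h]
    simp only [ascSet, mem_filter, mem_Icc, not_and, not_lt]
    exact ⟨fun hi => hi.2, fun hi => hi ⟨hi₁, hi₂⟩⟩

lemma sum_ite_ribbonCond {M : Type*} [AddCommMonoid M] (f : Finset ℕ → M) (κ : ℕ → ℕ) :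
    ∑ c : Composition n, (if RibbonCond n c κ then f (compSet c) else 0) = f (ascSet n κ) := by
  obtain ⟨c₀, hc₀⟩ := exists_compSet_eq (ascSet_subset_Icc n κ)
  simp_rw [ribbonCond_iff_compSet_eq, ← hc₀, compSet_injective.eq_iff]
  rw [sum_ite_eq' univ c₀ (fun c => f (compSet c)), if_pos (mem_univ _)]

lemma asc_pathEdges (κ : ℕ → ℕ) : asc (pathEdges n) κ = #(ascSet n κ) := by
  rw [asc, pathEdges, filter_image, card_image_of_injective _ (fun i j h => congrArg Prod.fst h)]
  simp [ascSet]

lemma wt_eq_card {v : ℕ → ℕ} {S : Finset ℕ} (hv : ∀ s ∈ S, v s = 1) : wt v S = #S := by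
  rw [wt, card_eq_sum_ones]
  exact sum_congr rfl hv

end Ascents

section Colorings

lemma colMono_apply_self_ne_zero {n v : ℕ} (κ : ℕ → ℕ) (hv : v ∈ Icc 1 n) :
    colMono n κ (κ v) ≠ 0 := by
  rw [colMono, Finsupp.finsetSum_apply]
  exact (sum_pos' (fun _ _ => Nat.zero_le _) ⟨v, hv, by simp⟩).ne'

lemma finite_colorings (n : ℕ) (d : ℕ →₀ ℕ) :
    {κ : ℕ → ℕ | Supported n κ ∧ colMono n κ = d}.Finite := by
  set S := {κ : ℕ → ℕ | Supported n κ ∧ colMono n κ = d}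
  have hvalues : ∀ κ ∈ S, ∀ v, κ v ∈ insert 0 d.support := by
    rintro κ ⟨hκ, rfl⟩ v
    by_cases hv : v ∈ Icc 1 n
    · exact mem_insert_of_mem (Finsupp.mem_support_iff.2 (colMono_apply_self_ne_zero κ hv))
    · rw [hκ v (by simp only [mem_Icc, not_and_or, not_le] at hv; omega)]
      exact mem_insert_self _ _
  have hinj : Set.InjOn (fun κ (v : Fin (n + 1)) => κ v) S := by
    intro κ₁ h₁ κ₂ h₂ h
    funext v
    by_cases hv : v ≤ n
    · exact congrFun h ⟨v, by omega⟩
    · rw [h₁.1 v (by omega), h₂.1 v (by omega)]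
  refine Set.Finite.of_finite_image
    ((Set.Finite.pi fun _ => (insert 0 d.support).finite_toSet).subset ?_) hinj
  rintro _ ⟨κ, hκ, rfl⟩ v -
  exact hvalues κ hκ v

lemma qRibbonSum_apply (n : ℕ) (v : ℕ → ℕ) (d : ℕ →₀ ℕ) :
    qRibbonSum n v d = ∑ᶠ κ : ℕ → ℕ,
      if Supported n κ ∧ colMono n κ = d then (X : ℤ[X]) ^ wt v (ascSet n κ) else 0 := by
  calc qRibbonSum n v d
      = ∑ c : Composition n, (X : ℤ[X]) ^ wt v (compSet c) * ribbon c d :=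
        Finset.sum_apply d univ _
    _ = ∑ c : Composition n, ∑ᶠ κ : ℕ → ℕ,
          if (Supported n κ ∧ colMono n κ = d) ∧ RibbonCond n c κ
          then (X : ℤ[X]) ^ wt v (compSet c) else 0 := by
        simp only [ribbon, mul_finsum, mul_ite, mul_one, mul_zero, and_assoc]
    _ = ∑ᶠ κ : ℕ → ℕ, ∑ c : Composition n,
          if (Supported n κ ∧ colMono n κ = d) ∧ RibbonCond n c κ
          then (X : ℤ[X]) ^ wt v (compSet c) else 0 := by
        refine (finsum_sum_comm _ _ fun c _ => (finite_colorings n d).subset ?_).symm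
        intro κ hκ
        by_contra h
        exact hκ (if_neg fun h' => h h'.1)
    _ = _ := by
        refine finsum_congr fun κ => ?_
        by_cases hκ : Supported n κ ∧ colMono n κ = d
        · simp only [hκ, true_and, if_true]
          exact sum_ite_ribbonCond (fun S => (X : ℤ[X]) ^ wt v S) κ
        · simp only [hκ, false_and, if_false, sum_const_zero]

end Colorings

theorem llt_path_general (n : ℕ) (a : ℕ → ℕ)
    (ha : ∀ i, 1 ≤ i → i ≤ n - 1 → a i = 1) :
    LLT n (pathEdges n) = qRibbonSum n a := by
  funext d
  rw [LLT, qRibbonSum_apply]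
  refine finsum_congr fun κ => ?_
  rw [asc_pathEdges, wt_eq_card fun i hi => ?_]
  obtain ⟨hi₁, hi₂⟩ := mem_Icc.1 (ascSet_subset_Icc n κ hi)
  exact ha i hi₁ hi₂

/-- Lemma `lemma:path`. For `n ≥ 1`, let `a = (1, …, 1)` be the area
sequence of the path `P_n`. Then `LLT_a(x;q) = Σ_{α ⊨ n} q^{a(set(α))} r_α`. -/
theorem llt_path (n : ℕ) (hn : 1 ≤ n) (a : ℕ → ℕ)
    (ha : ∀ i, 1 ≤ i → i ≤ n - 1 → a i = 1) :
    LLT n (pathEdges n) = qRibbonSum n a :=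
  llt_path_general n a ha
end
end

section
/- Let a = (a_1,…,a_{N−1}), a', a'' be area sequences of unit interval graphs on N vertices that differ only in position i, with a_i = a'_i + 1 = a''_i + 2, and suppose a_{i−1} + 1 ≤ a_i (where a_0 = 0) and a_{i+a_i−1} = a_{i+a_i} + 1. Then LLT_a(x;q) + q · LLT_{a''}(x;q) = (1+q) · LLT_{a'}(x;q). -/
open scoped Classical

noncomputable section

/-! ### Auxiliary lemmas for `llt_modular` -/

lemma mem_graphOfArea' {N : ℕ} {b : ℕ → ℕ} {e : ℕ × ℕ} :
    e ∈ graphOfArea N b ↔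
      1 ≤ e.1 ∧ e.1 ≤ N ∧ 1 ≤ e.2 ∧ e.2 ≤ N ∧ e.1 < e.2 ∧ e.2 ≤ e.1 + b e.1 := by
  simp [graphOfArea, Finset.mem_filter, Finset.mem_product, Finset.mem_Icc]
  tauto

lemma exists_reach_edge' {N : ℕ} {E : Finset (ℕ × ℕ)} (hE : IsUnitInterval N E)
    {a : ℕ → ℕ} (haE : ∀ i, a i = areaSeq E i) {j : ℕ} (h : 1 ≤ a j) :
    (j, j + a j) ∈ E := by
  have hne : (E.filter fun e => e.1 = j).Nonempty := by
    by_contra hc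
    rw [Finset.not_nonempty_iff_eq_empty] at hc
    have := haE j
    rw [areaSeq, hc] at this
    simp at this
    omega
  obtain ⟨e, he, hsup⟩ := Finset.exists_mem_eq_sup _ hne (fun e : ℕ × ℕ => e.2 - e.1)
  rw [Finset.mem_filter] at he
  obtain ⟨heE, he1⟩ := he
  have hlt := (hE.1 e heE).2.1
  have haj : a j = e.2 - e.1 := by rw [haE, areaSeq, hsup]
  have : e = (j, j + a j) := by
    obtain ⟨x, y⟩ := e
    simp_all
    omega
  rwa [this] at heE

lemma area_step' {N : ℕ} {a : ℕ → ℕ}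
    (ha : ∃ E, IsUnitInterval N E ∧ ∀ i, a i = areaSeq E i)
    (j : ℕ) : j + a j ≤ (j + 1) + a (j + 1) := by
  obtain ⟨E, hE, haE⟩ := ha
  rcases Nat.lt_or_ge (a j) 2 with h | h
  · omega
  · have hedge : (j, j + a j) ∈ E := exists_reach_edge' hE haE (by omega)
    have h2 : (j + 1, j + a j) ∈ E :=
      hE.2 j (j + a j) (j + 1) (j + a j) hedge (by omega) (by omega) le_rfl
    have : a j - 1 ≤ a (j + 1) := by
      rw [haE (j + 1), areaSeq]
      have hmem : (j + 1, j + a j) ∈ E.filter fun e => e.1 = j + 1 := by simp [h2]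
      calc a j - 1 = (j + a j) - (j + 1) := by omega
      _ ≤ _ := Finset.le_sup (f := fun e : ℕ × ℕ => e.2 - e.1) hmem
    omega

lemma area_mono' {N : ℕ} {a : ℕ → ℕ}
    (ha : ∃ E, IsUnitInterval N E ∧ ∀ i, a i = areaSeq E i)
    {j k : ℕ} (h : j ≤ k) : j + a j ≤ k + a k := by
  induction k, h using Nat.le_induction with
  | base => rfl
  | succ n hn ih => exact le_trans ih (area_step' ha n)

lemma asc_insert' {E : Finset (ℕ × ℕ)} {x y : ℕ} (hxy : x < y) (hnot : (x, y) ∉ E)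
    (κ : ℕ → ℕ) : asc (insert (x, y) E) κ = asc E κ + if κ x < κ y then 1 else 0 := by
  unfold asc
  rw [Finset.filter_insert]
  by_cases h : κ x < κ y
  · simp only [hxy, h, and_self, if_true]
    rw [Finset.card_insert_of_notMem (fun hc => hnot (Finset.mem_of_mem_filter _ hc))]
  · simp [hxy, h]

lemma asc_swap' {E : Finset (ℕ × ℕ)} {P Q : ℕ} (hPQ : P < Q) (hmem : (P, Q) ∈ E)
    (hinc : ∀ e ∈ E, e.1 < e.2)
    (hsym : ∀ e ∈ E, e ≠ (P, Q) → ((Equiv.swap P Q) e.1, (Equiv.swap P Q) e.2) ∈ E)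
    (κ : ℕ → ℕ) :
    asc E (fun v => κ (Equiv.swap P Q v)) + (if κ P < κ Q then 1 else 0)
      = asc E κ + (if κ Q < κ P then 1 else 0) := by
  set τ := Equiv.swap P Q with hτ
  have hRE : E = insert (P, Q) (E.erase (P, Q)) := (Finset.insert_erase hmem).symm
  have hnot : (P, Q) ∉ E.erase (P, Q) := Finset.notMem_erase _ _
  have h1 : asc E κ = asc (E.erase (P, Q)) κ + if κ P < κ Q then 1 else 0 := by
    conv_lhs => rw [hRE]
    exact asc_insert' hPQ hnot κ
  have h2 : asc E (fun v => κ (τ v)) = asc (E.erase (P, Q)) (fun v => κ (τ v))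
      + if κ Q < κ P then 1 else 0 := by
    conv_lhs => rw [hRE]
    rw [asc_insert' hPQ hnot]
    simp [hτ, Equiv.swap_apply_left, Equiv.swap_apply_right]
  have h3 : asc (E.erase (P, Q)) (fun v => κ (τ v)) = asc (E.erase (P, Q)) κ := by
    unfold asc
    apply Finset.card_nbij' (i := fun e => (τ e.1, τ e.2)) (j := fun e => (τ e.1, τ e.2))
    · intro e he
      simp only [Finset.mem_coe, Finset.mem_filter, Finset.mem_erase] at he ⊢
      obtain ⟨⟨hne, heE⟩, hlt, hasc⟩ := he
      have hmem' : (τ e.1, τ e.2) ∈ E := hsym e heE hne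
      refine ⟨⟨?_, hmem'⟩, hinc _ hmem', hasc⟩
      intro hc
      have hfst : τ e.1 = P := congrArg Prod.fst hc
      have hsnd : τ e.2 = Q := congrArg Prod.snd hc
      have he1 : e.1 = Q := by have := congrArg τ hfst; simpa [hτ] using this
      have he2 : e.2 = P := by have := congrArg τ hsnd; simpa [hτ] using this
      omega
    · intro e he
      simp only [Finset.mem_coe, Finset.mem_filter, Finset.mem_erase] at he ⊢
      obtain ⟨⟨hne, heE⟩, hlt, hasc⟩ := he
      have hmem' : (τ e.1, τ e.2) ∈ E := hsym e heE hne
      refine ⟨⟨?_, hmem'⟩, hinc _ hmem', by simpa [hτ] using hasc⟩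
      intro hc
      have hfst : τ e.1 = P := congrArg Prod.fst hc
      have hsnd : τ e.2 = Q := congrArg Prod.snd hc
      have he1 : e.1 = Q := by have := congrArg τ hfst; simpa [hτ] using this
      have he2 : e.2 = P := by have := congrArg τ hsnd; simpa [hτ] using this
      omega
    · intro e _; simp [hτ]
    · intro e _; simp [hτ]
  omega

lemma colorSet_finite' (N : ℕ) (d : ℕ →₀ ℕ) :
    {κ : ℕ → ℕ | Supported N κ ∧ colMono N κ = d}.Finite := by
  set S := {κ : ℕ → ℕ | Supported N κ ∧ colMono N κ = d} with hS
  have hval : ∀ κ ∈ S, ∀ v, κ v ∈ (insert 0 d.support : Finset ℕ) := by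
    rintro κ ⟨hsupp, hcol⟩ v
    rcases Classical.em (1 ≤ v ∧ v ≤ N) with hv | hv
    · have h1 : (1 : ℕ) ≤ (colMono N κ) (κ v) := by
        rw [colMono, Finsupp.finset_sum_apply]
        calc (1 : ℕ) = Finsupp.single (κ v) 1 (κ v) := by simp
        _ ≤ _ := Finset.single_le_sum (f := fun w => Finsupp.single (κ w) 1 (κ v))
            (fun w _ => Nat.zero_le _) (Finset.mem_Icc.mpr ⟨hv.1, hv.2⟩)
      rw [hcol] at h1
      simp only [Finset.mem_insert, Finsupp.mem_support_iff]
      right; omega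
    · have : κ v = 0 := hsupp v (by omega)
      simp [this]
  apply Set.Finite.of_finite_image (f := fun κ (v : Fin (N + 1)) => κ v.val)
  · apply Set.Finite.subset (Set.Finite.pi (t := fun _ : Fin (N + 1) =>
      ((insert 0 d.support : Finset ℕ) : Set ℕ)) (fun _ => Finset.finite_toSet _))
    rintro g ⟨κ, hκ, rfl⟩
    intro v _
    exact hval κ hκ v.val
  · rintro κ hκ κ' hκ' heq
    funext v
    rcases Classical.em (v ≤ N) with hv | hv
    · exact congrFun heq ⟨v, by omega⟩
    · rw [hκ.1 v (by omega), hκ'.1 v (by omega)]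

lemma colMono_swap' (N P Q : ℕ) (hP : P ∈ Finset.Icc 1 N) (hQ : Q ∈ Finset.Icc 1 N)
    (κ : ℕ → ℕ) : colMono N (fun v => κ (Equiv.swap P Q v)) = colMono N κ := by
  unfold colMono
  apply Finset.sum_nbij' (i := fun v => Equiv.swap P Q v) (j := fun v => Equiv.swap P Q v)
  · intro v hv
    rcases Classical.em (v = P) with rfl | h1
    · simpa [Equiv.swap_apply_left] using hQ
    rcases Classical.em (v = Q) with rfl | h2
    · simpa [Equiv.swap_apply_right] using hP
    · rwa [Equiv.swap_apply_of_ne_of_ne h1 h2]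
  · intro v hv
    rcases Classical.em (v = P) with rfl | h1
    · simpa [Equiv.swap_apply_left] using hQ
    rcases Classical.em (v = Q) with rfl | h2
    · simpa [Equiv.swap_apply_right] using hP
    · rwa [Equiv.swap_apply_of_ne_of_ne h1 h2]
  · intro v _; simp
  · intro v _; simp
  · intro v _; simp

lemma supported_swap' (N P Q : ℕ) (hP : P ∈ Finset.Icc 1 N) (hQ : Q ∈ Finset.Icc 1 N)
    (κ : ℕ → ℕ) (h : Supported N κ) : Supported N (fun v => κ (Equiv.swap P Q v)) := by
  intro v hv
  simp only [Finset.mem_Icc] at hP hQ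
  show κ (Equiv.swap P Q v) = 0
  rw [Equiv.swap_apply_of_ne_of_ne (by omega) (by omega)]
  exact h v hv

/-- Theorem `theorem:modular`, Lee's local linear relation. Let
`a, a', a''` be area sequences of unit interval graphs on `N` vertices differing only in
position `i`, with `a_i = a'_i + 1 = a''_i + 2`, `a_{i-1} + 1 ≤ a_i` (where `a_0 = 0`) and
`a_{i+a_i-1} = a_{i+a_i} + 1`. Then `LLT_a + q LLT_{a''} = (1+q) LLT_{a'}`. -/
theorem llt_modular (N i : ℕ) (hi1 : 1 ≤ i) (hiN : i ≤ N - 1) (a a' a'' : ℕ → ℕ)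
    (ha : IsAreaSeq N a) (ha' : IsAreaSeq N a') (ha'' : IsAreaSeq N a'')
    (hagree : ∀ j, j ≠ i → a j = a' j ∧ a' j = a'' j)
    (h1 : a i = a' i + 1) (h2 : a' i = a'' i + 1)
    (hlow : a (i - 1) + 1 ≤ a i)
    (hhigh : a (i + a i - 1) = a (i + a i) + 1) :
    LLTarea N a + (Polynomial.X : Polynomial ℤ) • LLTarea N a''
      = ((1 : Polynomial ℤ) + Polynomial.X) • LLTarea N a' := by
  classical
  have hai2 : 2 ≤ a i := by omega
  obtain ⟨E₀, hE₀, haE₀⟩ := ha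
  have haEx : ∃ E, IsUnitInterval N E ∧ ∀ j, a j = areaSeq E j := ⟨E₀, hE₀, haE₀⟩
  have hQN : i + a i ≤ N := by
    have := (hE₀.1 _ (exists_reach_edge' hE₀ haE₀ (j := i) (by omega))).2.2
    simpa using this
  obtain ⟨P, hPdef⟩ : ∃ P, P = i + a i - 1 := ⟨_, rfl⟩
  obtain ⟨Q, hQdef⟩ : ∃ Q, Q = i + a i := ⟨_, rfl⟩
  have hPQ : P + 1 = Q := by omega
  have hiP : i < P := by omega
  have haP : a P = a Q + 1 := by rw [hPdef, hQdef]; exact hhigh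
  have ha''P : a'' P = a P := by have := hagree P (by omega); omega
  have ha''Q : a'' Q = a Q := by have := hagree Q (by omega); omega
  have ha''i : a'' i + 2 = a i := by omega
  have ha'i : a' i + 1 = a i := by omega
  set E2 := graphOfArea N a'' with hE2def
  -- the two key symmetry facts
  have hkey1 : ∀ x, x < P → (((x, P) ∈ E2) ↔ ((x, Q) ∈ E2)) := by
    intro x hx
    rw [hE2def, mem_graphOfArea', mem_graphOfArea']
    simp only
    constructor
    · rintro ⟨g1, g2, g3, g4, g5, g6⟩
      refine ⟨g1, g2, by omega, by omega, by omega, ?_⟩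
      rcases lt_trichotomy x i with hxi | rfl | hxi
      · exfalso
        have e1 : a x = a' x := (hagree x (by omega)).1
        have e2 : a' x = a'' x := (hagree x (by omega)).2
        have hm : x + a x ≤ (i - 1) + a (i - 1) := area_mono' haEx (by omega)
        omega
      · omega
      · have e1 : a x = a' x := (hagree x (by omega)).1
        have e2 : a' x = a'' x := (hagree x (by omega)).2
        have hm : i + a i ≤ x + a x := area_mono' haEx (by omega)
        omega
    · rintro ⟨g1, g2, g3, g4, g5, g6⟩
      exact ⟨g1, g2, by omega, by omega, hx, by omega⟩
  have hkey2 : ∀ y, Q < y → (((P, y) ∈ E2) ↔ ((Q, y) ∈ E2)) := by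
    intro y hy
    rw [hE2def, mem_graphOfArea', mem_graphOfArea']
    simp only
    constructor
    · rintro ⟨g1, g2, g3, g4, g5, g6⟩
      exact ⟨by omega, by omega, g3, g4, by omega, by omega⟩
    · rintro ⟨g1, g2, g3, g4, g5, g6⟩
      exact ⟨by omega, by omega, g3, g4, by omega, by omega⟩
  have hPQmem : (P, Q) ∈ E2 := by
    rw [hE2def, mem_graphOfArea']
    simp only
    refine ⟨by omega, by omega, by omega, by omega, by omega, by omega⟩
  have hinc : ∀ e ∈ E2, e.1 < e.2 := by
    intro e he
    rw [hE2def, mem_graphOfArea'] at he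
    exact he.2.2.2.2.1
  have hsym : ∀ e ∈ E2, e ≠ (P, Q) →
      ((Equiv.swap P Q) e.1, (Equiv.swap P Q) e.2) ∈ E2 := by
    rintro ⟨x, y⟩ he hne
    have hxy : x < y := hinc _ he
    simp only
    rcases Classical.em (x = P) with hxP | hxP
    · have hyQ : y ≠ Q := fun hc => hne (by rw [hxP, hc])
      have hyP : y ≠ P := by omega
      rw [hxP, Equiv.swap_apply_left, Equiv.swap_apply_of_ne_of_ne hyP hyQ]
      refine (hkey2 y (by omega)).mp ?_
      rw [← hxP]; exact he
    rcases Classical.em (x = Q) with hxQ | hxQ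
    · have hyP : y ≠ P := by omega
      have hyQ : y ≠ Q := by omega
      rw [hxQ, Equiv.swap_apply_right, Equiv.swap_apply_of_ne_of_ne hyP hyQ]
      refine (hkey2 y (by omega)).mpr ?_
      rw [← hxQ]; exact he
    rcases Classical.em (y = P) with hyP | hyP
    · rw [hyP, Equiv.swap_apply_of_ne_of_ne hxP hxQ, Equiv.swap_apply_left]
      refine (hkey1 x (by omega)).mp ?_
      rw [← hyP]; exact he
    rcases Classical.em (y = Q) with hyQ | hyQ
    · rw [hyQ, Equiv.swap_apply_of_ne_of_ne hxP hxQ, Equiv.swap_apply_right]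
      refine (hkey1 x (by omega)).mpr ?_
      rw [← hyQ]; exact he
    · rw [Equiv.swap_apply_of_ne_of_ne hxP hxQ, Equiv.swap_apply_of_ne_of_ne hyP hyQ]
      exact he
  -- decomposition of the three edge sets
  have hE'eq : graphOfArea N a' = insert (i, P) E2 := by
    ext e
    obtain ⟨x, y⟩ := e
    rw [Finset.mem_insert, hE2def, mem_graphOfArea', mem_graphOfArea', Prod.mk.injEq]
    simp only
    constructor
    · rintro ⟨g1, g2, g3, g4, g5, g6⟩
      rcases Classical.em (x = i) with rfl | hxi
      · rcases Classical.em (y = P) with rfl | hyP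
        · left; exact ⟨rfl, rfl⟩
        · right; exact ⟨g1, g2, g3, g4, g5, by omega⟩
      · right
        have e2 : a' x = a'' x := (hagree x hxi).2
        exact ⟨g1, g2, g3, g4, g5, by omega⟩
    · rintro (⟨rfl, rfl⟩ | ⟨g1, g2, g3, g4, g5, g6⟩)
      · refine ⟨by omega, by omega, by omega, by omega, by omega, by omega⟩
      · rcases Classical.em (x = i) with rfl | hxi
        · exact ⟨g1, g2, g3, g4, g5, by omega⟩
        · have e2 : a' x = a'' x := (hagree x hxi).2
          exact ⟨g1, g2, g3, g4, g5, by omega⟩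
  have hEeq : graphOfArea N a = insert (i, Q) (graphOfArea N a') := by
    ext e
    obtain ⟨x, y⟩ := e
    rw [Finset.mem_insert, mem_graphOfArea', mem_graphOfArea', Prod.mk.injEq]
    simp only
    constructor
    · rintro ⟨g1, g2, g3, g4, g5, g6⟩
      rcases Classical.em (x = i) with rfl | hxi
      · rcases Classical.em (y = Q) with rfl | hyQ
        · left; exact ⟨rfl, rfl⟩
        · right; exact ⟨g1, g2, g3, g4, g5, by omega⟩
      · right
        have e1 : a x = a' x := (hagree x hxi).1
        exact ⟨g1, g2, g3, g4, g5, by omega⟩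
    · rintro (⟨rfl, rfl⟩ | ⟨g1, g2, g3, g4, g5, g6⟩)
      · refine ⟨by omega, by omega, by omega, by omega, by omega, by omega⟩
      · rcases Classical.em (x = i) with rfl | hxi
        · exact ⟨g1, g2, g3, g4, g5, by omega⟩
        · have e1 : a x = a' x := (hagree x hxi).1
          exact ⟨g1, g2, g3, g4, g5, by omega⟩
  have hnotin1 : (i, P) ∉ E2 := by
    rw [hE2def, mem_graphOfArea']
    simp only
    omega
  have hnotin2 : (i, Q) ∉ graphOfArea N a' := by
    rw [mem_graphOfArea']
    simp only
    omega
  have hascE' : ∀ κ : ℕ → ℕ,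
      asc (graphOfArea N a') κ = asc E2 κ + if κ i < κ P then 1 else 0 := by
    intro κ
    rw [hE'eq]
    exact asc_insert' hiP hnotin1 κ
  have hascE : ∀ κ : ℕ → ℕ,
      asc (graphOfArea N a) κ = asc (graphOfArea N a') κ + if κ i < κ Q then 1 else 0 := by
    intro κ
    rw [hEeq]
    exact asc_insert' (by omega) hnotin2 κ
  have hrel : ∀ κ : ℕ → ℕ,
      asc E2 (fun v => κ (Equiv.swap P Q v)) + (if κ P < κ Q then 1 else 0)
        = asc E2 κ + (if κ Q < κ P then 1 else 0) :=
    fun κ => asc_swap' (by omega) hPQmem hinc hsym κ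
  have hPmem : P ∈ Finset.Icc 1 N := Finset.mem_Icc.mpr ⟨by omega, by omega⟩
  have hQmem : Q ∈ Finset.Icc 1 N := Finset.mem_Icc.mpr ⟨by omega, by omega⟩
  have e1 : Equiv.swap P Q i = i := Equiv.swap_apply_of_ne_of_ne (by omega) (by omega)
  have e2 : Equiv.swap P Q P = Q := Equiv.swap_apply_left P Q
  have e3 : Equiv.swap P Q Q = P := Equiv.swap_apply_right P Q
  -- now prove the identity coefficientwise
  funext d
  have hfin := colorSet_finite' N d
  set F := hfin.toFinset with hFdef
  have hconv : ∀ E : Finset (ℕ × ℕ), (LLT N E) d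
      = ∑ κ ∈ F, (if Supported N κ ∧ colMono N κ = d
          then (Polynomial.X : Polynomial ℤ) ^ asc E κ else 0) := by
    intro E
    apply finsum_eq_sum_of_support_subset
    intro κ hκ
    rw [Function.mem_support] at hκ
    have hm : Supported N κ ∧ colMono N κ = d := by
      by_contra hc
      exact hκ (if_neg hc)
    rw [hFdef, Set.Finite.coe_toFinset]
    exact hm
  show (LLT N (graphOfArea N a)) d + Polynomial.X * (LLT N (graphOfArea N a'')) d
      = (1 + Polynomial.X) * (LLT N (graphOfArea N a')) d
  rw [hconv, hconv, hconv, Finset.mul_sum, Finset.mul_sum, ← Finset.sum_add_distrib,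
    ← sub_eq_zero, ← Finset.sum_sub_distrib]
  have hsummand : ∀ κ : ℕ → ℕ,
      ((if Supported N κ ∧ colMono N κ = d
          then (Polynomial.X : Polynomial ℤ) ^ asc (graphOfArea N a) κ else 0)
        + Polynomial.X * (if Supported N κ ∧ colMono N κ = d
          then (Polynomial.X : Polynomial ℤ) ^ asc (graphOfArea N a'') κ else 0))
        - (1 + Polynomial.X) * (if Supported N κ ∧ colMono N κ = d
          then (Polynomial.X : Polynomial ℤ) ^ asc (graphOfArea N a') κ else 0)
      = if Supported N κ ∧ colMono N κ = d
          then ((Polynomial.X : Polynomial ℤ) ^ asc (graphOfArea N a) κ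
            + Polynomial.X * (Polynomial.X : Polynomial ℤ) ^ asc E2 κ
            - (1 + Polynomial.X) * (Polynomial.X : Polynomial ℤ) ^ asc (graphOfArea N a') κ)
          else 0 := by
    intro κ
    rw [hE2def]
    split_ifs with hg
    · ring
    · ring
  rw [Finset.sum_congr rfl (fun κ _ => hsummand κ)]
  set φ : (ℕ → ℕ) → Polynomial ℤ := fun κ =>
      if Supported N κ ∧ colMono N κ = d
        then ((Polynomial.X : Polynomial ℤ) ^ asc (graphOfArea N a) κ
          + Polynomial.X * (Polynomial.X : Polynomial ℤ) ^ asc E2 κ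
          - (1 + Polynomial.X) * (Polynomial.X : Polynomial ℤ) ^ asc (graphOfArea N a') κ)
        else 0 with hφdef
  have hgate : ∀ κ : ℕ → ℕ, (Supported N κ ∧ colMono N κ = d) →
      (Supported N (fun v => κ (Equiv.swap P Q v))
        ∧ colMono N (fun v => κ (Equiv.swap P Q v)) = d) := by
    intro κ hg
    refine ⟨supported_swap' N P Q hPmem hQmem κ hg.1, ?_⟩
    rw [colMono_swap' N P Q hPmem hQmem]
    exact hg.2
  have hdouble : ∀ κ : ℕ → ℕ,
      (fun v => (fun w => κ (Equiv.swap P Q w)) (Equiv.swap P Q v)) = κ := by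
    intro κ
    funext v
    simp [Equiv.swap_apply_self]
  have hkey : ∀ κ : ℕ → ℕ, φ (fun v => κ (Equiv.swap P Q v)) = - φ κ := by
    intro κ
    by_cases hg : Supported N κ ∧ colMono N κ = d
    · have hg' := hgate κ hg
      rw [hφdef]
      simp only [if_pos hg, if_pos hg']
      rw [hascE, hascE, hascE', hascE']
      simp only [e1, e2, e3]
      have hr := hrel κ
      set t := asc E2 (fun v => κ (Equiv.swap P Q v)) with htdef
      set s := asc E2 κ with hsdef
      rcases lt_trichotomy (κ P) (κ Q) with hpq | hpq | hpq
      · rw [if_pos hpq, if_neg (by omega)] at hr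
        by_cases hb2 : κ i < κ P <;> by_cases hb1 : κ i < κ Q
        · simp only [hb1, hb2, if_true]
          rw [show s = t + 1 from by omega]; ring
        · exact absurd (lt_trans hb2 hpq) hb1
        · simp only [hb1, hb2, if_true, if_false]
          rw [show s = t + 1 from by omega]; ring
        · simp only [hb1, hb2, if_false]
          rw [show s = t + 1 from by omega]; ring
      · rw [if_neg (by omega), if_neg (by omega)] at hr
        by_cases hb2 : κ i < κ P <;> by_cases hb1 : κ i < κ Q
        · simp only [hb1, hb2, if_true]
          rw [show s = t from by omega]; ring
        · exact absurd (hpq ▸ hb2) hb1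
        · exact absurd (hpq ▸ hb1) hb2
        · simp only [hb1, hb2, if_false]
          rw [show s = t from by omega]; ring
      · rw [if_neg (by omega), if_pos hpq] at hr
        by_cases hb2 : κ i < κ P <;> by_cases hb1 : κ i < κ Q
        · simp only [hb1, hb2, if_true]
          rw [show t = s + 1 from by omega]; ring
        · simp only [hb1, hb2, if_true, if_false]
          rw [show t = s + 1 from by omega]; ring
        · exact absurd (lt_trans hb1 hpq) hb2
        · simp only [hb1, hb2, if_false]
          rw [show t = s + 1 from by omega]; ring
    · have hg2 : ¬(Supported N (fun v => κ (Equiv.swap P Q v))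
          ∧ colMono N (fun v => κ (Equiv.swap P Q v)) = d) := by
        intro hc
        apply hg
        have := hgate _ hc
        rwa [hdouble κ] at this
      rw [hφdef]
      simp only [if_neg hg, if_neg hg2, neg_zero]
  have hmemF : ∀ κ : ℕ → ℕ, κ ∈ F → (fun v => κ (Equiv.swap P Q v)) ∈ F := by
    intro κ hκ
    rw [hFdef, Set.Finite.mem_toFinset, Set.mem_setOf_eq] at hκ ⊢
    exact hgate κ hκ
  have hstep : ∑ κ ∈ F, φ κ = ∑ κ ∈ F, φ (fun v => κ (Equiv.swap P Q v)) := by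
    apply Finset.sum_nbij' (i := fun κ => fun v => κ (Equiv.swap P Q v))
      (j := fun κ => fun v => κ (Equiv.swap P Q v))
    · exact hmemF
    · exact hmemF
    · intro κ _; exact hdouble κ
    · intro κ _; exact hdouble κ
    · intro κ _
      rw [hdouble κ]
  have hneg : ∑ κ ∈ F, φ κ = - ∑ κ ∈ F, φ κ := by
    conv_lhs => rw [hstep]
    rw [Finset.sum_congr rfl (fun κ _ => hkey κ), Finset.sum_neg_distrib]
  have hzero : (∑ κ ∈ F, φ κ) + (∑ κ ∈ F, φ κ) = 0 := by
    linear_combination hneg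
  exact add_self_eq_zero.mp hzero
end
end

section
/- For compositions α ⊨ n and β ⊨ m, the ribbon Schur functions satisfy r_α · r_β = r_{α·β} + r_{α⊙β}, where α·β is the concatenation and α⊙β is the near concatenation of α and β. -/
open scoped Classical

noncomputable section

/-!
The coefficient of `x^d` in `r_α` counts the colorings of the ribbon `α` with content `d`, so
`r_α r_β` counts pairs of such colorings with total content `d`. Gluing the pair `(κ₁, κ₂)`
into one coloring of `[n + m]` imposes every condition of `α · β` and of `α ⊙ β` except the one
at the junction `n`; that one holds for exactly one of the two compositions, for `α · β` when
`κ₁ n < κ₂ 1` and for `α ⊙ β` otherwise. So gluing is a content-preserving bijection from pairs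
onto the disjoint union of the colorings of `α · β` and of `α ⊙ β`.
-/

section WeightGenFun

variable {σ R X Y : Type*} [Semiring R]

def weightGenFun (w : X → σ →₀ ℕ) : MvPowerSeries σ R := fun d => Nat.card {x // w x = d}

theorem coeff_weightGenFun (w : X → σ →₀ ℕ) (d : σ →₀ ℕ) :
    MvPowerSeries.coeff d (weightGenFun w : MvPowerSeries σ R) = Nat.card {x // w x = d} :=
  rfl

theorem weightGenFun_congr (e : X ≃ Y) {w : X → σ →₀ ℕ} {v : Y → σ →₀ ℕ}
    (h : ∀ x, v (e x) = w x) : (weightGenFun w : MvPowerSeries σ R) = weightGenFun v :=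
  funext fun _ => congrArg Nat.cast <| Nat.card_congr <| e.subtypeEquiv fun x => by rw [h]

theorem weightGenFun_sumElim {w : X → σ →₀ ℕ} {v : Y → σ →₀ ℕ}
    (hw : ∀ d, Finite {x // w x = d}) (hv : ∀ d, Finite {y // v y = d}) :
    (weightGenFun (Sum.elim w v) : MvPowerSeries σ R) = weightGenFun w + weightGenFun v := by
  ext d : 1
  rw [map_add, coeff_weightGenFun, coeff_weightGenFun, coeff_weightGenFun, ← Nat.cast_add,
    ← Nat.card_sum]
  exact congrArg Nat.cast (Nat.card_congr Equiv.subtypeSum)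

theorem weightGenFun_mul {w : X → σ →₀ ℕ} {v : Y → σ →₀ ℕ}
    (hw : ∀ d, Finite {x // w x = d}) (hv : ∀ d, Finite {y // v y = d}) :
    (weightGenFun w * weightGenFun v : MvPowerSeries σ R) =
      weightGenFun fun z : X × Y => w z.1 + v z.2 := by
  ext d
  have fibers : {z : X × Y // w z.1 + v z.2 = d} ≃
      Σ p : Finset.HasAntidiagonal.antidiagonal d, {x // w x = p.1.1} × {y // v y = p.1.2} :=
    (Equiv.sigmaSubtypeFiberEquivSubtype (fun z : X × Y => (w z.1, v z.2))
      fun _ => by rw [Finset.HasAntidiagonal.mem_antidiagonal]).symm.trans <|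
    Equiv.sigmaCongrRight fun p =>
      (Equiv.subtypeEquivRight fun _ => Prod.ext_iff).trans
        (Equiv.subtypeProdEquivProd (p := fun x => w x = p.1.1) (q := fun y => v y = p.1.2))
  rw [MvPowerSeries.coeff_mul, coeff_weightGenFun, Nat.card_congr fibers, Nat.card_sigma,
    Nat.cast_sum, ← Finset.sum_coe_sort]
  simp only [Nat.card_prod, Nat.cast_mul, coeff_weightGenFun]

theorem weightGenFun_subtype_or {p q : X → Prop} [DecidablePred p]
    (h : Disjoint p q) (w : X → σ →₀ ℕ)
    (hp : ∀ d, Finite {x : {x // p x} // w x = d}) (hq : ∀ d, Finite {x : {x // q x} // w x = d}) :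
    (weightGenFun (fun x : {x // p x ∨ q x} => w x) : MvPowerSeries σ R) =
      weightGenFun (fun x : {x // p x} => w x) + weightGenFun (fun x : {x // q x} => w x) := by
  rw [weightGenFun_congr (subtypeOrEquiv p q h) (v := Sum.elim _ _), weightGenFun_sumElim hp hq]
  intro x
  by_cases hx : p x <;> simp [hx]

end WeightGenFun

theorem finsum_ite_one_eq_natCard {α M : Type*} [AddCommMonoidWithOne M] {p : α → Prop}
    [DecidablePred p] (h : {x | p x}.Finite) :
    ∑ᶠ x, (if p x then (1 : M) else 0) = Nat.card {x // p x} := by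
  change _ = ((Nat.card {x | p x} : ℕ) : M)
  rw [Nat.card_coe_set_eq, ← finsum_one, Nat.cast_finsum_mem h, Nat.cast_one, finsum_mem_def]
  exact finsum_congr fun x => by simp [Set.indicator_apply]

theorem compSet_subset_Ioo {n : ℕ} (c : Composition n) : compSet c ⊆ Finset.Ioo 0 n := by
  intro s hs
  obtain ⟨j, hj, rfl⟩ := Finset.mem_image.mp hs
  rw [Finset.mem_Ico] at hj
  have hlen : 0 < c.length := by omega
  rw [Finset.mem_Ioo]
  exact ⟨(c.sizeUpTo_zero ▸ c.sizeUpTo_strict_mono hlen).trans_le (c.monotone_sizeUpTo hj.1),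
    (c.sizeUpTo_strict_mono hj.2).trans_le (c.sizeUpTo_le _)⟩

theorem mem_support_of_colMono_eq {n : ℕ} {κ : ℕ → ℕ} {d : ℕ →₀ ℕ} (h : colMono n κ = d)
    {v : ℕ} (hv : v ∈ Finset.Icc 1 n) : κ v ∈ d.support := by
  have : Finsupp.single (κ v) 1 ≤ d :=
    h ▸ Finset.single_le_sum (f := fun v => Finsupp.single (κ v) 1) (fun _ _ => zero_le) hv
  exact Finsupp.support_mono this (by simp)

theorem finite_setOf_supported_colMono_eq (n : ℕ) (d : ℕ →₀ ℕ) :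
    {κ | Supported n κ ∧ colMono n κ = d}.Finite := by
  let restrict : (ℕ → ℕ) → Fin n → ℕ := fun κ i => κ (i + 1)
  refine Set.Finite.of_finite_image (f := restrict) ?_ ?_
  · refine (Set.Finite.pi (t := fun _ => (d.support : Set ℕ))
      fun _ => d.support.finite_toSet).subset ?_
    rintro _ ⟨κ, ⟨-, hκ⟩, rfl⟩ i -
    exact mem_support_of_colMono_eq hκ (Finset.mem_Icc.mpr ⟨by omega, by omega⟩)
  · rintro κ ⟨hκ, -⟩ κ' ⟨hκ', -⟩ h
    funext v
    by_cases hv : 1 ≤ v ∧ v ≤ n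
    · simpa [restrict, Nat.sub_add_cancel hv.1] using congrFun h ⟨v - 1, by omega⟩
    · rw [hκ v (by omega), hκ' v (by omega)]

def IsRibbonColoring {n : ℕ} (c : Composition n) (κ : ℕ → ℕ) : Prop :=
  Supported n κ ∧ RibbonCond n c κ

theorem finite_setOf_ribbon_colMono_eq {n : ℕ} (c : Composition n) (d : ℕ →₀ ℕ) :
    {κ | Supported n κ ∧ colMono n κ = d ∧ RibbonCond n c κ}.Finite :=
  (finite_setOf_supported_colMono_eq n d).subset fun _ ⟨hs, hd, _⟩ => ⟨hs, hd⟩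

def ribbonColoringFiberEquiv {n : ℕ} (c : Composition n) (d : ℕ →₀ ℕ) :
    {κ : {κ // IsRibbonColoring c κ} // colMono n κ = d} ≃
      {κ // Supported n κ ∧ colMono n κ = d ∧ RibbonCond n c κ} :=
  (Equiv.subtypeSubtypeEquivSubtypeInter (IsRibbonColoring c) (colMono n · = d)).trans <|
    Equiv.subtypeEquivRight fun _ => by unfold IsRibbonColoring; tauto

theorem finite_ribbonColoring_fiber {n : ℕ} (c : Composition n) (d : ℕ →₀ ℕ) :
    Finite {κ : {κ // IsRibbonColoring c κ} // colMono n κ = d} :=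
  have : Finite {κ // Supported n κ ∧ colMono n κ = d ∧ RibbonCond n c κ} :=
    (finite_setOf_ribbon_colMono_eq c d).to_subtype
  .of_equiv _ (ribbonColoringFiberEquiv c d).symm

theorem ribbon_eq_weightGenFun {n : ℕ} (c : Composition n) :
    ribbon c = weightGenFun fun κ : {κ // IsRibbonColoring c κ} => colMono n κ := by
  ext d : 1
  rw [coeff_weightGenFun, Nat.card_congr (ribbonColoringFiberEquiv c d)]
  exact finsum_ite_one_eq_natCard (M := Polynomial ℤ) (finite_setOf_ribbon_colMono_eq c d)

section Glue

variable {n m : ℕ}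

def glue (n : ℕ) (κ₁ κ₂ : ℕ → ℕ) : ℕ → ℕ := fun v => if v ≤ n then κ₁ v else κ₂ (v - n)

def leftPart (n : ℕ) (κ : ℕ → ℕ) : ℕ → ℕ := fun v => if v ≤ n then κ v else 0

def rightPart (n : ℕ) (κ : ℕ → ℕ) : ℕ → ℕ := fun v => if v = 0 then 0 else κ (v + n)

theorem glue_of_le {κ₁ κ₂ : ℕ → ℕ} {v : ℕ} (hv : v ≤ n) : glue n κ₁ κ₂ v = κ₁ v := if_pos hv

theorem glue_add_of_pos {κ₁ κ₂ : ℕ → ℕ} {j : ℕ} (hj : 0 < j) : glue n κ₁ κ₂ (j + n) = κ₂ j := by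
  rw [glue, if_neg (by omega), Nat.add_sub_cancel]

theorem glue_leftPart_rightPart (κ : ℕ → ℕ) : glue n (leftPart n κ) (rightPart n κ) = κ := by
  funext v
  by_cases hv : v ≤ n
  · simp [glue, leftPart, hv]
  · simp [glue, rightPart, hv, show v - n ≠ 0 by omega, Nat.sub_add_cancel (le_of_not_ge hv)]

theorem leftPart_glue {κ₁ κ₂ : ℕ → ℕ} (h : Supported n κ₁) : leftPart n (glue n κ₁ κ₂) = κ₁ := by
  funext v
  by_cases hv : v ≤ n
  · simp [leftPart, glue, hv]
  · simp [leftPart, hv, h v (by omega)]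

theorem rightPart_glue {κ₁ κ₂ : ℕ → ℕ} (h : Supported m κ₂) :
    rightPart n (glue n κ₁ κ₂) = κ₂ := by
  funext v
  by_cases hv : v = 0
  · simp [rightPart, hv, h 0 (by omega)]
  · simp [rightPart, hv, glue_add_of_pos (Nat.pos_of_ne_zero hv)]

theorem Supported.glue {κ₁ κ₂ : ℕ → ℕ} (h₁ : Supported n κ₁) (h₂ : Supported m κ₂) :
    Supported (n + m) (glue n κ₁ κ₂) := by
  intro v hv
  by_cases hvn : v ≤ n
  · rw [glue_of_le hvn, h₁ v (by omega)]
  · rw [_root_.glue, if_neg hvn, h₂ _ (by omega)]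

theorem Supported.leftPart {κ : ℕ → ℕ} (h : Supported (n + m) κ) :
    Supported n (leftPart n κ) := by
  intro v hv
  by_cases hvn : v ≤ n
  · rw [_root_.leftPart, if_pos hvn, h v (by omega)]
  · rw [_root_.leftPart, if_neg hvn]

theorem Supported.rightPart {κ : ℕ → ℕ} (h : Supported (n + m) κ) :
    Supported m (rightPart n κ) := by
  intro v hv
  by_cases hv0 : v = 0
  · rw [_root_.rightPart, if_pos hv0]
  · rw [_root_.rightPart, if_neg hv0, h _ (by omega)]

theorem colMono_eq_sum_range (n : ℕ) (κ : ℕ → ℕ) :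
    colMono n κ = ∑ i ∈ Finset.range n, Finsupp.single (κ (i + 1)) 1 := by
  rw [colMono, ← Finset.Ico_add_one_right_eq_Icc, Finset.sum_Ico_eq_sum_range, Nat.add_sub_cancel]
  simp only [add_comm 1]

theorem colMono_glue (n m : ℕ) (κ₁ κ₂ : ℕ → ℕ) :
    colMono (n + m) (glue n κ₁ κ₂) = colMono n κ₁ + colMono m κ₂ := by
  simp only [colMono_eq_sum_range, Finset.sum_range_add]
  congr 1
  · exact Finset.sum_congr rfl fun i hi => by rw [glue_of_le (by simp at hi; omega)]
  · exact Finset.sum_congr rfl fun i _ => by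
      rw [show n + i + 1 = i + 1 + n by omega, glue_add_of_pos i.succ_pos]

theorem ribbonCond_glue_iff (hn : 1 ≤ n) (hm : 1 ≤ m) {α : Composition n}
    {β : Composition m} {c : Composition (n + m)}
    (hc : (compSet c).erase n = compSet α ∪ (compSet β).image (· + n)) {κ₁ κ₂ : ℕ → ℕ} :
    RibbonCond (n + m) c (glue n κ₁ κ₂) ↔
      RibbonCond n α κ₁ ∧ RibbonCond m β κ₂ ∧ (n ∈ compSet c ↔ κ₁ n < κ₂ 1) := by
  have mem_ne (i : ℕ) (hi : i ≠ n) :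
      i ∈ compSet c ↔ i ∈ compSet α ∨ ∃ s ∈ compSet β, s + n = i := by
    simpa [hi] using Finset.ext_iff.mp hc i
  have mem_left (i : ℕ) (hi : i < n) : i ∈ compSet c ↔ i ∈ compSet α := by
    rw [mem_ne i hi.ne, or_iff_left]
    rintro ⟨s, -, rfl⟩
    omega
  have mem_right (j : ℕ) (hj : 0 < j) : j + n ∈ compSet c ↔ j ∈ compSet β := by
    rw [mem_ne (j + n) (by omega), or_iff_right]
    · simp
    · intro h
      have := Finset.mem_Ioo.mp (compSet_subset_Ioo α h)
      omega
  have glue_n : glue n κ₁ κ₂ n = κ₁ n := glue_of_le le_rfl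
  have glue_n_succ : glue n κ₁ κ₂ (n + 1) = κ₂ 1 := by
    rw [add_comm, glue_add_of_pos one_pos]
  have step_n : ((n ∈ compSet c → κ₁ n < κ₂ 1) ∧ (n ∉ compSet c → κ₂ 1 ≤ κ₁ n)) ↔
      (n ∈ compSet c ↔ κ₁ n < κ₂ 1) := by
    by_cases h : n ∈ compSet c <;> simp [h]
  constructor
  · intro h
    refine ⟨fun i hi₁ hi₂ => ?_, fun j hj₁ hj₂ => ?_, ?_⟩
    · have := h i hi₁ (by omega)
      rwa [glue_of_le (by omega), glue_of_le (by omega), mem_left i (by omega)] at this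
    · have := h (j + n) (by omega) (by omega)
      rwa [show j + n + 1 = j + 1 + n by omega, glue_add_of_pos (by omega),
        glue_add_of_pos (by omega), mem_right j (by omega)] at this
    · have := h n hn (by omega)
      rwa [glue_n, glue_n_succ, step_n] at this
  · rintro ⟨h₁, h₂, hn_mem⟩ i hi₁ hi₂
    rcases lt_trichotomy i n with hi | rfl | hi
    · rw [glue_of_le hi.le, glue_of_le hi, mem_left i hi]
      exact h₁ i hi₁ (by omega)
    · rwa [glue_n, glue_n_succ, step_n]
    · obtain ⟨j, rfl⟩ : ∃ j, i = j + n := ⟨i - n, by omega⟩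
      rw [show j + n + 1 = j + 1 + n by omega, glue_add_of_pos (by omega),
        glue_add_of_pos (by omega), mem_right j (by omega)]
      exact h₂ j (by omega) (by omega)

end Glue

theorem disjoint_isRibbonColoring {N i : ℕ} {c c' : Composition N} (hi : 1 ≤ i) (hiN : i < N)
    (hc : i ∈ compSet c) (hc' : i ∉ compSet c') :
    Disjoint (IsRibbonColoring c) (IsRibbonColoring c') := by
  refine Pi.disjoint_iff.mpr fun κ => Prop.disjoint_iff.mpr ?_
  rintro ⟨⟨-, h⟩, -, h'⟩
  have := (h i hi (by omega)).1 hc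
  have := (h' i hi (by omega)).2 hc'
  omega

theorem erase_compSet_union_singleton {n m : ℕ} (α : Composition n) (β : Composition m) :
    (compSet α ∪ {n} ∪ (compSet β).image (· + n)).erase n =
      compSet α ∪ (compSet β).image (· + n) := by
  have hα : n ∉ compSet α := fun h => (Finset.mem_Ioo.mp (compSet_subset_Ioo α h)).2.false
  have hβ : n ∉ (compSet β).image (· + n) := by
    rintro h
    obtain ⟨s, hs, hsn⟩ := Finset.mem_image.mp h
    have := Finset.mem_Ioo.mp (compSet_subset_Ioo β hs)
    omega
  rw [Finset.erase_union_distrib, Finset.erase_union_distrib, Finset.erase_singleton,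
    Finset.union_empty, Finset.erase_eq_of_notMem hα, Finset.erase_eq_of_notMem hβ]

section GlueEquiv

variable {n m : ℕ} {α : Composition n} {β : Composition m} {γ δ : Composition (n + m)}

theorem isRibbonColoring_glue (hn : 1 ≤ n) (hm : 1 ≤ m)
    (hγ : (compSet γ).erase n = compSet α ∪ (compSet β).image (· + n))
    (hδ : (compSet δ).erase n = compSet α ∪ (compSet β).image (· + n))
    (hnγ : n ∈ compSet γ) (hnδ : n ∉ compSet δ) {κ₁ κ₂ : ℕ → ℕ}
    (h₁ : IsRibbonColoring α κ₁) (h₂ : IsRibbonColoring β κ₂) :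
    IsRibbonColoring γ (glue n κ₁ κ₂) ∨ IsRibbonColoring δ (glue n κ₁ κ₂) := by
  have hs := h₁.1.glue h₂.1
  by_cases hlt : κ₁ n < κ₂ 1
  · exact .inl ⟨hs, (ribbonCond_glue_iff hn hm hγ).mpr ⟨h₁.2, h₂.2, iff_of_true hnγ hlt⟩⟩
  · exact .inr ⟨hs, (ribbonCond_glue_iff hn hm hδ).mpr ⟨h₁.2, h₂.2, iff_of_false hnδ hlt⟩⟩

theorem isRibbonColoring_leftPart_rightPart (hn : 1 ≤ n) (hm : 1 ≤ m) {c : Composition (n + m)}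
    (hc : (compSet c).erase n = compSet α ∪ (compSet β).image (· + n)) {κ : ℕ → ℕ}
    (h : IsRibbonColoring c κ) :
    IsRibbonColoring α (leftPart n κ) ∧ IsRibbonColoring β (rightPart n κ) := by
  obtain ⟨hs, hr⟩ := h
  rw [← glue_leftPart_rightPart (n := n) κ, ribbonCond_glue_iff hn hm hc] at hr
  exact ⟨⟨hs.leftPart, hr.1⟩, ⟨hs.rightPart, hr.2.1⟩⟩

def ribbonGlueEquiv (hn : 1 ≤ n) (hm : 1 ≤ m)
    (hγ : (compSet γ).erase n = compSet α ∪ (compSet β).image (· + n))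
    (hδ : (compSet δ).erase n = compSet α ∪ (compSet β).image (· + n))
    (hnγ : n ∈ compSet γ) (hnδ : n ∉ compSet δ) :
    {κ // IsRibbonColoring α κ} × {κ // IsRibbonColoring β κ} ≃
      {κ // IsRibbonColoring γ κ ∨ IsRibbonColoring δ κ} where
  toFun z := ⟨glue n z.1 z.2, isRibbonColoring_glue hn hm hγ hδ hnγ hnδ z.1.2 z.2.2⟩
  invFun κ :=
    have parts := κ.2.elim (isRibbonColoring_leftPart_rightPart hn hm hγ)
      (isRibbonColoring_leftPart_rightPart hn hm hδ)
    (⟨leftPart n κ, parts.1⟩, ⟨rightPart n κ, parts.2⟩)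
  left_inv z :=
    Prod.ext (Subtype.ext (leftPart_glue z.1.2.1)) (Subtype.ext (rightPart_glue z.2.2.1))
  right_inv κ := Subtype.ext (glue_leftPart_rightPart κ.1)

end GlueEquiv

/-- For compositions `α ⊨ n` and `β ⊨ m`,
`r_α ⬝ r_β = r_{α·β} + r_{α⊙β}`, where the concatenation `α·β ⊨ n+m` satisfies
`set(α·β) = set(α) ∪ {n} ∪ {n+s : s ∈ set(β)}` and the near concatenation `α⊙β ⊨ n+m`
satisfies `set(α⊙β) = set(α·β) \ {n}`. -/
theorem ribbon_mul (n m : ℕ) (hn : 1 ≤ n) (hm : 1 ≤ m)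
    (α : Composition n) (β : Composition m) (γ δ : Composition (n + m))
    (hγ : compSet γ = compSet α ∪ {n} ∪ (compSet β).image (· + n))
    (hδ : compSet δ = (compSet α ∪ {n} ∪ (compSet β).image (· + n)) \ {n}) :
    ribbon α * ribbon β = ribbon γ + ribbon δ := by
  have hnγ : n ∈ compSet γ := by simp [hγ]
  have hnδ : n ∉ compSet δ := by simp [hδ]
  have hγ' : (compSet γ).erase n = compSet α ∪ (compSet β).image (· + n) := by
    rw [hγ, erase_compSet_union_singleton]
  have hδ' : (compSet δ).erase n = compSet α ∪ (compSet β).image (· + n) := by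
    rw [hδ, Finset.sdiff_singleton_eq_erase, Finset.erase_idem, erase_compSet_union_singleton]
  rw [ribbon_eq_weightGenFun α, ribbon_eq_weightGenFun β, ribbon_eq_weightGenFun γ,
    ribbon_eq_weightGenFun δ,
    weightGenFun_mul (finite_ribbonColoring_fiber α) (finite_ribbonColoring_fiber β),
    weightGenFun_congr (ribbonGlueEquiv hn hm hγ' hδ' hnγ hnδ)
      (v := fun κ => colMono (n + m) κ) fun z => colMono_glue n m z.1 z.2,
    weightGenFun_subtype_or (disjoint_isRibbonColoring hn (by omega) hnγ hnδ) _
      (finite_ribbonColoring_fiber γ) (finite_ribbonColoring_fiber δ)]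
end
end
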